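/- Let d ≥ 2 be an integer and let w ∈ ℝ^d satisfy w(1) ≠ 0 and w(d) ≠ 0. Then the quotient set Q∼(w,d) is finite with cardinality at most 2d − 2. -/

import Mathlib

open scoped BigOperators
open MeasureTheory

noncomputable section

/-- 1-based access into a vector `u ∈ ℝ^d`, with the convention that
out-of-range indices (including `0` and anything `> d`) give `0`. -/
def pad1 {d : ℕ} (u : Fin d → ℝ) (i : ℕ) : ℝ :=
  if h : 1 ≤ i ∧ i ≤ d then u ⟨i - 1, by omega⟩ else 0

/-- The lifted linear convolution map `S_{(m,n)} : ℝ^{m×n} → ℝ^{m+n-1}`,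
summing the entries of a matrix along its anti-diagonals. -/
def liftS (m n : ℕ) (W : Matrix (Fin m) (Fin n) ℝ) : Fin (m + n - 1) → ℝ :=
  fun l => ∑ k : Fin m, ∑ j : Fin n, if (k : ℕ) + (j : ℕ) = (l : ℕ) then W k j else 0

/-- Linear convolution `x ⋆ y ∈ ℝ^{m+n-1}` of `x ∈ ℝ^m` and `y ∈ ℝ^n`. -/
def conv {m n : ℕ} (x : Fin m → ℝ) (y : Fin n → ℝ) : Fin (m + n - 1) → ℝ :=
  fun l => ∑ k : Fin m, ∑ j : Fin n, if (k : ℕ) + (j : ℕ) = (l : ℕ) then x k * y j else 0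

/-- The rank-two null space `N(S_{(m,n)}, 2)`. -/
def rankTwoNull (m n : ℕ) : Set (Matrix (Fin m) (Fin n) ℝ) :=
  {Q | Q.rank ≤ 2 ∧ liftS m n Q = 0}

/-- The parametrized family `N0(m,n)`:
`Q(k,l) = u(k)·v(l−1) − u(k−1)·v(l)` (1-based, with zero-padding conventions). -/
def N0set (m n : ℕ) : Set (Matrix (Fin m) (Fin n) ℝ) :=
  {Q | ∃ (u : Fin (m - 1) → ℝ) (v : Fin (n - 1) → ℝ),
    ∀ (k : Fin m) (l : Fin n),
      Q k l = pad1 u ((k : ℕ) + 1) * pad1 v (l : ℕ) - pad1 u (k : ℕ) * pad1 v ((l : ℕ) + 1)}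

/-- The recursively defined family `N2(m,n)`:
`Q(k,l) = u₁(k)·v₁(l−1) + u₂(k−1)·v₂(l)` (1-based, with zero-padding conventions),
where `u₁v₁ᵀ + u₂v₂ᵀ ∈ N(S_{(m-1,n-1)}, 2) \ {0}`. -/
def N2set (m n : ℕ) : Set (Matrix (Fin m) (Fin n) ℝ) :=
  {Q | ∃ (u₁ u₂ : Fin (m - 1) → ℝ) (v₁ v₂ : Fin (n - 1) → ℝ),
    (Matrix.of fun i j => u₁ i * v₁ j + u₂ i * v₂ j) ∈ rankTwoNull (m - 1) (n - 1) ∧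
    (Matrix.of fun i j => u₁ i * v₁ j + u₂ i * v₂ j) ≠ (0 : Matrix (Fin (m - 1)) (Fin (n - 1)) ℝ) ∧
    ∀ (k : Fin m) (l : Fin n),
      Q k l = pad1 u₁ ((k : ℕ) + 1) * pad1 v₁ (l : ℕ) + pad1 u₂ (k : ℕ) * pad1 v₂ ((l : ℕ) + 1)}

/-- The exceptional set `M(m,n) = {Q ∈ N(S_{(m,n)}, 2) : Q(m,1) = 0 and Q(1,n) = 0}` (1-based). -/
def Mexc (m n : ℕ) (hm : 0 < m) (hn : 0 < n) : Set (Matrix (Fin m) (Fin n) ℝ) :=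
  {Q | Q ∈ rankTwoNull m n ∧ Q ⟨m - 1, by omega⟩ ⟨0, hn⟩ = 0 ∧ Q ⟨0, hm⟩ ⟨n - 1, by omega⟩ = 0}

/-- Identifiability of the pair `p = (x,y)` with respect to linear convolution
and the constraint set `K`. -/
def Identifiable {m n : ℕ} (K : Set ((Fin m → ℝ) × (Fin n → ℝ)))
    (p : (Fin m → ℝ) × (Fin n → ℝ)) : Prop :=
  ∀ q ∈ K, conv q.1 q.2 = conv p.1 p.2 →
    ∃ α : ℝ, α ≠ 0 ∧ q.1 = α • p.1 ∧ q.2 = (1 / α) • p.2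

/-- The quotient set `Q∼(w,d)`: pairs `(w*, γ) ∈ ℝ^{d-1} × [0, 2π)` with
`w(j) = w*(j)·cos γ − w*(j−1)·sin γ` for `1 ≤ j ≤ d` (1-based, zero-padding conventions). -/
def quotSet (d : ℕ) (w : Fin d → ℝ) : Set ((Fin (d - 1) → ℝ) × ℝ) :=
  {p | p.2 ∈ Set.Ico 0 (2 * Real.pi) ∧
    ∀ j : Fin d, w j = pad1 p.1 ((j : ℕ) + 1) * Real.cos p.2 - pad1 p.1 (j : ℕ) * Real.sin p.2}

/-- Matrices over `ℝ` carry the (product) metric space structure of `ℝ^{m×n}`. -/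
instance {m n : ℕ} : MetricSpace (Matrix (Fin m) (Fin n) ℝ) :=
  show MetricSpace (Fin m → Fin n → ℝ) from inferInstance

/-!
If `(u, γ) ∈ Q∼(w,d)` then `w(1) = u(1) cos γ`, so `cos γ ≠ 0`, and the relations determine `u`
from `w` and `γ` recursively. Multiplying the `j`-th relation by `sin^{d-j} γ · cos^{j-1} γ`
makes the sum over `j` telescope to `0`, so `tan γ` is a root of `∑ⱼ w(j) X^{d-j}`, a nonzero
polynomial of degree at most `d - 1` because `w(d) ≠ 0`. Each value of `tan` is taken by at most
two angles of `[0, 2π)`, one in each half.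
-/

open Polynomial Real

lemma pad1_zero {m : ℕ} (u : Fin m → ℝ) : pad1 u 0 = 0 := by
  rw [pad1, dif_neg]; omega

lemma pad1_succ {m : ℕ} (u : Fin m → ℝ) {i : ℕ} (h : i < m) : pad1 u (i + 1) = u ⟨i, h⟩ := by
  rw [pad1, dif_pos ⟨by omega, by omega⟩]
  rfl

lemma pad1_eq_zero_of_lt {m : ℕ} (u : Fin m → ℝ) {i : ℕ} (h : m < i) : pad1 u i = 0 := by
  rw [pad1, dif_neg]; omega

lemma eq_of_pad1_comb_eq {m : ℕ} {c : ℝ} (hc : c ≠ 0) (s : ℝ) {u u' : Fin m → ℝ}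
    (h : ∀ j < m, pad1 u (j + 1) * c - pad1 u j * s = pad1 u' (j + 1) * c - pad1 u' j * s) :
    u = u' := by
  have hpad : ∀ j, pad1 u j = pad1 u' j := by
    intro j
    induction j with
    | zero => rw [pad1_zero, pad1_zero]
    | succ j ih =>
      by_cases hj : j < m
      · have := h j hj
        rw [ih] at this
        exact mul_right_cancel₀ hc (by linarith)
      · rw [pad1_eq_zero_of_lt u (by omega), pad1_eq_zero_of_lt u' (by omega)]
  funext i
  simpa only [pad1_succ _ i.2] using hpad (i + 1)

lemma sum_mul_pow_eq_zero_of_pad1_comb {d : ℕ} {w : Fin d → ℝ} {u : Fin (d - 1) → ℝ} {c s : ℝ}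
    (h : ∀ j : Fin d, w j = pad1 u (j + 1) * c - pad1 u j * s) :
    ∑ j : Fin d, w j * s ^ (d - 1 - j) * c ^ (j : ℕ) = 0 := by
  set g : ℕ → ℝ := fun j => pad1 u j * s ^ (d - j) * c ^ j
  have hterm : ∀ j ∈ Finset.range d,
      (pad1 u (j + 1) * c - pad1 u j * s) * s ^ (d - 1 - j) * c ^ j = g (j + 1) - g j := by
    intro j hj
    have hj : j < d := Finset.mem_range.mp hj
    simp only [g]
    rw [show d - j = d - 1 - j + 1 by omega, show d - (j + 1) = d - 1 - j by omega]
    ring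
  have hgd : g d = 0 := by
    rcases Nat.eq_zero_or_pos d with hd | hd
    · simp only [g, hd, pad1_zero, zero_mul]
    · simp only [g, pad1_eq_zero_of_lt u (show d - 1 < d by omega), zero_mul]
  simp_rw [h]
  rw [Fin.sum_univ_eq_sum_range (fun j => (pad1 u (j + 1) * c - pad1 u j * s) * s ^ (d - 1 - j) *
    c ^ j), Finset.sum_congr rfl hterm, Finset.sum_range_sub, hgd]
  simp only [g, pad1_zero, zero_mul, sub_zero]

def descPoly {d : ℕ} (w : Fin d → ℝ) : ℝ[X] :=
  ∑ j : Fin d, C (w j) * X ^ (d - 1 - j)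

lemma descPoly_coeff_zero {d : ℕ} (w : Fin d → ℝ) (hd : 0 < d) :
    (descPoly w).coeff 0 = w ⟨d - 1, by omega⟩ := by
  rw [descPoly, finsetSum_coeff, Finset.sum_eq_single (⟨d - 1, by omega⟩ : Fin d)]
  · simp
  · intro j _ hj
    have : (j : ℕ) ≠ d - 1 := fun h => hj (Fin.ext h)
    simp [coeff_X_pow]
    omega
  · simp

lemma natDegree_descPoly_le {d : ℕ} (w : Fin d → ℝ) : (descPoly w).natDegree ≤ d - 1 :=
  natDegree_sum_le_of_forall_le _ _ fun _ _ => (natDegree_C_mul_X_pow_le _ _).trans (by omega)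

lemma pow_mul_eval_descPoly_div {d : ℕ} (w : Fin d → ℝ) {c : ℝ} (hc : c ≠ 0) (s : ℝ) :
    c ^ (d - 1) * (descPoly w).eval (s / c) = ∑ j : Fin d, w j * s ^ (d - 1 - j) * c ^ (j : ℕ) := by
  simp only [descPoly, eval_finsetSum, eval_mul, eval_C, eval_pow, eval_X, Finset.mul_sum]
  refine Finset.sum_congr rfl fun j _ => ?_
  rw [div_pow, ← pow_sub_mul_pow c (show (j : ℕ) ≤ d - 1 by omega)]
  field_simp

lemma isRoot_descPoly_tan {d : ℕ} {w : Fin d → ℝ} {p : (Fin (d - 1) → ℝ) × ℝ}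
    (hp : p ∈ quotSet d w) (hc : cos p.2 ≠ 0) : (descPoly w).IsRoot (tan p.2) := by
  have h := pow_mul_eval_descPoly_div w hc (sin p.2)
  rw [sum_mul_pow_eq_zero_of_pad1_comb hp.2, ← tan_eq_sin_div_cos] at h
  exact (mul_eq_zero.mp h).resolve_left (pow_ne_zero _ hc)

lemma cos_ne_zero_of_mem_quotSet {d : ℕ} (hd : 0 < d) {w : Fin d → ℝ} (hw : w ⟨0, hd⟩ ≠ 0)
    {p : (Fin (d - 1) → ℝ) × ℝ} (hp : p ∈ quotSet d w) : cos p.2 ≠ 0 := by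
  intro hc
  have := hp.2 ⟨0, hd⟩
  simp only [pad1_zero, hc] at this
  exact hw (by simpa using this)

lemma injOn_snd_quotSet {d : ℕ} (hd : 0 < d) {w : Fin d → ℝ} (hw : w ⟨0, hd⟩ ≠ 0) :
    Set.InjOn Prod.snd (quotSet d w) := by
  rintro ⟨u, γ⟩ hp ⟨u', γ'⟩ hq (rfl : γ = γ')
  have hc := cos_ne_zero_of_mem_quotSet hd hw hp
  suffices u = u' by rw [this]
  refine eq_of_pad1_comb_eq hc (sin γ) fun j hj => ?_
  rw [← hp.2 ⟨j, by omega⟩, ← hq.2 ⟨j, by omega⟩]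

lemma injOn_tan_decide_lt_pi :
    Set.InjOn (fun γ => (tan γ, decide (γ < π))) {γ | γ ∈ Set.Ico 0 (2 * π) ∧ cos γ ≠ 0} := by
  rintro γ ⟨⟨hγ0, hγ2⟩, hγc⟩ γ' ⟨⟨hγ'0, hγ'2⟩, hγ'c⟩ h
  simp only [Prod.mk.injEq, decide_eq_decide] at h
  obtain ⟨htan, hhalf⟩ := h
  have hsin : sin (γ - γ') = 0 := by
    rw [tan_eq_sin_div_cos, tan_eq_sin_div_cos, div_eq_div_iff hγc hγ'c] at htan
    rw [sin_sub]
    linarith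
  have hdist : -π < γ - γ' ∧ γ - γ' < π := by
    by_cases hγ : γ < π
    · have := hhalf.mp hγ
      constructor <;> linarith
    · have := mt hhalf.mpr hγ
      constructor <;> linarith
  linarith [(sin_eq_zero_iff_of_lt_of_lt hdist.1 hdist.2).mp hsin]

/-- for `d ≥ 2` and `w ∈ ℝ^d` with `w(1) ≠ 0` and `w(d) ≠ 0`, the quotient
set `Q∼(w,d)` is finite with cardinality at most `2d − 2`. -/
theorem stmt9 (d : ℕ) (hd : 2 ≤ d) (w : Fin d → ℝ)
    (h1 : w ⟨0, by omega⟩ ≠ 0) (h2 : w ⟨d - 1, by omega⟩ ≠ 0) :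
    (quotSet d w).Finite ∧ (quotSet d w).ncard ≤ 2 * d - 2 := by
  classical
  have hP : descPoly w ≠ 0 := fun h =>
    h2 (by rw [← descPoly_coeff_zero w (by omega), h, coeff_zero])
  set R := (descPoly w).roots.toFinset ×ˢ (Finset.univ : Finset Bool)
  set f : (Fin (d - 1) → ℝ) × ℝ → ℝ × Bool := fun p => (tan p.2, decide (p.2 < π))
  have hcos : ∀ p ∈ quotSet d w, cos p.2 ≠ 0 := fun p => cos_ne_zero_of_mem_quotSet (by omega) h1
  have hmaps : Set.MapsTo f (quotSet d w) R := fun p hp =>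
    Finset.mem_product.mpr ⟨Multiset.mem_toFinset.mpr <|
      (mem_roots hP).mpr (isRoot_descPoly_tan hp (hcos p hp)), Finset.mem_univ _⟩
  have hinj : Set.InjOn f (quotSet d w) := fun p hp q hq hpq =>
    injOn_snd_quotSet (by omega) h1 hp hq <|
      injOn_tan_decide_lt_pi ⟨hp.1, hcos p hp⟩ ⟨hq.1, hcos q hq⟩ hpq
  have hroots : (descPoly w).roots.toFinset.card ≤ d - 1 :=
    (Multiset.toFinset_card_le _).trans ((card_roots' _).trans (natDegree_descPoly_le w))
  refine ⟨Set.Finite.of_injOn hmaps hinj R.finite_toSet, ?_⟩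
  calc (quotSet d w).ncard ≤ (R : Set (ℝ × Bool)).ncard :=
        Set.ncard_le_ncard_of_injOn f hmaps hinj R.finite_toSet
    _ = (descPoly w).roots.toFinset.card * 2 := by simp [R]
    _ ≤ 2 * d - 2 := by omega
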